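/- For two vertices w, x both distinct from u and v and not both in the same one of the three sets S₁ = N(u)\N(v)\{v}, S₂ = N(v)\N(u)\{u}, S₃ = N(u)∩N(v): if w and x lie in two different of these three sets, then w and x are adjacent in G ∧ uv if and only if they are non-adjacent in G; if w and x lie in the same set or at least one lies in none of the sets, their adjacency is unchanged. -/

import Mathlib

/-- Local complementation of a simple graph `G` at a vertex `u`: toggles all
edges between pairs of distinct neighbors of `u`, leaving all other edges unchanged. -/
def localComp {V : Type*} (G : SimpleGraph V) (u : V) : SimpleGraph V where
  Adj v w := v ≠ w ∧ Xor' (G.Adj v w) (G.Adj u v ∧ G.Adj u w)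
  symm := ⟨by
    rintro v w ⟨h1, h2⟩
    refine ⟨h1.symm, ?_⟩
    rwa [G.adj_comm w v, and_comm]⟩
  loopless := ⟨by rintro v ⟨h, _⟩; exact h rfl⟩

/-- The pivot of `G` along the edge `{u,v}`: `G ∧ uv = ((G * u) * v) * u`. -/
def pivot {V : Type*} (G : SimpleGraph V) (u v : V) : SimpleGraph V :=
  localComp (localComp (localComp G u) v) u

/-- `S₁ = N(u) \ N(v) \ {v}`: exclusive neighbors of `u`. -/
def S1 {V : Type*} (G : SimpleGraph V) (u v : V) : Set V :=
  {z | G.Adj u z ∧ ¬ G.Adj v z ∧ z ≠ v}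

/-- `S₂ = N(v) \ N(u) \ {u}`: exclusive neighbors of `v`. -/
def S2 {V : Type*} (G : SimpleGraph V) (u v : V) : Set V :=
  {z | G.Adj v z ∧ ¬ G.Adj u z ∧ z ≠ u}

/-- `S₃ = N(u) ∩ N(v)`: shared neighbors of `u` and `v`. -/
def S3 {V : Type*} (G : SimpleGraph V) (u v : V) : Set V :=
  {z | G.Adj u z ∧ G.Adj v z}

/-! Write `a, b, c, d` for the adjacencies `uw, vw, ux, vx` and `⊕` for exclusive or.
Local complementation at `u` toggles `wx` by `a ∧ c`. In `G * u` the neighbourhood of `v` away from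
`u, v` is `N(v) ⊕ N(u)`, so `v` toggles `wx` by `(a ⊕ b) ∧ (c ⊕ d)`; afterwards the neighbourhood
of `u` away from `u, v` is `N(v)`, so the last step toggles by `b ∧ d`. The three toggles add up
to `(a ∧ d) ⊕ (b ∧ c)`, and since `S₁, S₂, S₃` are the vertices with `(a, b) = (1, 0), (0, 1),
(1, 1)`, this holds exactly when `w` and `x` lie in two different ones of them. -/

section

variable {V : Type*} (G : SimpleGraph V)

theorem localComp_adj_of_ne {u w x : V} (hwx : w ≠ x) :
    (localComp G u).Adj w x ↔ Xor (G.Adj w x) (G.Adj u w ∧ G.Adj u x) :=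
  and_iff_right hwx

theorem localComp_adj_self_left (u z : V) : (localComp G u).Adj u z ↔ G.Adj u z := by
  rcases eq_or_ne u z with rfl | huz
  · simp [localComp]
  · simp [localComp_adj_of_ne G huz, xor_comm]

theorem localComp_localComp_adj_left {u v z : V} (huv : G.Adj u v) (hzu : z ≠ u) (hzv : z ≠ v) :
    (localComp (localComp G u) v).Adj u z ↔ G.Adj v z := by
  rw [localComp_adj_of_ne _ hzu.symm, localComp_adj_self_left, (localComp G u).adj_comm v u,
    localComp_adj_self_left, localComp_adj_of_ne _ hzv.symm]
  simp only [huv, true_and]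
  grind

theorem pivot_adj_of_ne {u v w x : V} (huv : G.Adj u v) (hwx : w ≠ x)
    (hwu : w ≠ u) (hwv : w ≠ v) (hxu : x ≠ u) (hxv : x ≠ v) :
    (pivot G u v).Adj w x ↔
      Xor (G.Adj w x) (Xor (G.Adj u w ∧ G.Adj v x) (G.Adj v w ∧ G.Adj u x)) := by
  rw [pivot, localComp_adj_of_ne _ hwx, localComp_localComp_adj_left G huv hwu hwv,
    localComp_localComp_adj_left G huv hxu hxv, localComp_adj_of_ne _ hwx,
    localComp_adj_of_ne _ hwv.symm, localComp_adj_of_ne _ hxv.symm, localComp_adj_of_ne _ hwx]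
  simp only [huv, true_and]
  grind

end

/-- Pivoting on `{u,v}` toggles edges between the three sets `S₁, S₂, S₃`:
if `w` and `x` (both distinct from `u, v`) lie in two different of these sets,
their adjacency is toggled; if they lie in the same set, or at least one lies
in none of the sets, their adjacency is unchanged. -/
theorem pivot_toggles_between_sets {V : Type*} (G : SimpleGraph V) (u v : V)
    (huv : G.Adj u v) (w x : V)
    (hwu : w ≠ u) (hwv : w ≠ v) (hxu : x ≠ u) (hxv : x ≠ v) :
    (((w ∈ S1 G u v ∧ x ∈ S2 G u v) ∨ (w ∈ S1 G u v ∧ x ∈ S3 G u v) ∨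
      (w ∈ S2 G u v ∧ x ∈ S1 G u v) ∨ (w ∈ S2 G u v ∧ x ∈ S3 G u v) ∨
      (w ∈ S3 G u v ∧ x ∈ S1 G u v) ∨ (w ∈ S3 G u v ∧ x ∈ S2 G u v)) →
      ((pivot G u v).Adj w x ↔ ¬ G.Adj w x)) ∧
    (((w ∈ S1 G u v ∧ x ∈ S1 G u v) ∨ (w ∈ S2 G u v ∧ x ∈ S2 G u v) ∨
      (w ∈ S3 G u v ∧ x ∈ S3 G u v) ∨
      w ∉ S1 G u v ∪ S2 G u v ∪ S3 G u v ∨ x ∉ S1 G u v ∪ S2 G u v ∪ S3 G u v) →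
      ((pivot G u v).Adj w x ↔ G.Adj w x)) := by
  rcases eq_or_ne w x with rfl | hwx
  · refine ⟨fun h => ?_, fun _ => by simp⟩
    simp only [S1, S2, S3, Set.mem_ofPred_eq] at h
    tauto
  · rw [pivot_adj_of_ne G huv hwx hwu hwv hxu hxv]
    simp only [S1, S2, S3, Set.mem_union, Set.mem_ofPred_eq, ne_eq, hwu, hwv, hxu, hxv,
      not_false_eq_true, and_true]
    grind
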